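/- arXiv:1312.4934 — 4 statements merged into one kernel-verified Lean document; each statement's English description precedes it below -/
import Mathlib

section
/- Let 1 ≤ p < ∞, 0 < α ≤ 1, and let f be analytic on the unit disc with M_p(r, f') = O((1-r)^{α-1}) as r → 1⁻. Then f belongs to H^p and ‖f_r - f‖_{H^p} = O((1-r)^α) as r → 1⁻. -/
open Complex MeasureTheory Real Metric Set Filter Topology Asymptotics

/-- The p-th integral mean of `f` on the circle of radius `r`. -/
noncomputable def Mp (p : ℝ) (f : ℂ → ℂ) (r : ℝ) : ℝ :=
  ((1 / (2 * π)) * ∫ θ in (-π)..π, ‖f ((r : ℂ) * Complex.exp ((θ : ℂ) * Complex.I))‖ ^ p) ^ (1 / p)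

/-- The Hardy space norm `sup_{0 ≤ r < 1} M_p(r, f)`. -/
noncomputable def hardyNorm (p : ℝ) (f : ℂ → ℂ) : ℝ :=
  ⨆ r : Set.Ico (0 : ℝ) 1, Mp p f r

/-- Membership in the Hardy space `H^p`. -/
def MemHp (p : ℝ) (f : ℂ → ℂ) : Prop :=
  AnalyticOn ℂ f (ball (0 : ℂ) 1) ∧
    BddAbove (Set.range fun r : Set.Ico (0 : ℝ) 1 => Mp p f r)

/-- The Bergman space norm with respect to normalized area measure on the unit disc. -/
noncomputable def bergmanNorm (p : ℝ) (f : ℂ → ℂ) : ℝ :=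
  (π⁻¹ * ∫ z in ball (0 : ℂ) 1, ‖f z‖ ^ p) ^ (1 / p)

/-- The area integral mean `A_p(r, f) = ‖f_r‖_{A^p}`. -/
noncomputable def Ap (p : ℝ) (f : ℂ → ℂ) (r : ℝ) : ℝ :=
  bergmanNorm p (fun z => f ((r : ℂ) * z))

/-- Membership in the Bergman space `A^p`. -/
def MemAp (p : ℝ) (f : ℂ → ℂ) : Prop :=
  AnalyticOn ℂ f (ball (0 : ℂ) 1) ∧
    IntegrableOn (fun z => ‖f z‖ ^ p) (ball (0 : ℂ) 1) volume

/-- The Dirichlet space norm `(|f(0)|² + ‖f'‖_{A²}²)^{1/2}`. -/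
noncomputable def dirichletNorm (f : ℂ → ℂ) : ℝ :=
  Real.sqrt (‖f 0‖ ^ 2 + bergmanNorm 2 (deriv f) ^ 2)

/-- Membership in the Dirichlet space. -/
def MemD (f : ℂ → ℂ) : Prop :=
  AnalyticOn ℂ f (ball (0 : ℂ) 1) ∧ MemAp 2 (deriv f)

/-!
Along each ray, `f (b e^{iθ}) - f (a e^{iθ}) = ∫_a^b e^{iθ} f'(t e^{iθ}) dt`, so Minkowski's
integral inequality gives `‖f_b - f_a‖_{L^p(∂𝔻)} ≤ ∫_a^b M_p(t, f') dt`. The hypothesis, together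
with continuity of `t ↦ M_p(t, f')` on `[0, 1)`, bounds `M_p(t, f')` by `A + B (1 - t)^(α - 1)`.
Since `M_p(s, f_r - f) = ‖f_s - f_{rs}‖_{L^p(∂𝔻)}`, integrating this bound from `rs` to `s` and
using the subadditivity of `x ↦ x^α` yields `M_p(s, f_r - f) ≤ (A + B / α) (1 - r)^α` uniformly
in `s`; the case `r = 0` bounds `M_p(s, f)` uniformly, so `f ∈ H^p`.
-/

open scoped ENNReal BoundedContinuousFunction

section Minkowski

open BoundedContinuousFunction

variable {X E : Type*} [TopologicalSpace X] [MeasurableSpace X] [BorelSpace X]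
  [NormedAddCommGroup E] [NormedSpace ℝ E] [SecondCountableTopologyEither X E]
  {μ : Measure X} [IsFiniteMeasure μ] {p : ℝ≥0∞} [Fact (1 ≤ p)]

theorem BoundedContinuousFunction.enorm_toLp (g : X →ᵇ E) :
    ‖toLp p μ ℝ g‖ₑ = eLpNorm g p μ := by
  rw [Lp.enorm_def, eLpNorm_congr_ae (coeFn_toLp p μ ℝ g)]

/-- Minkowski's integral inequality, proved by integrating `G` in the Banach space `X →ᵇ E` and
pushing the integral through evaluation at points and through `toLp`. -/
theorem eLpNorm_sub_le_integral_eLpNorm_of_hasDerivAt [CompleteSpace E] {F : ℝ → X → E}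
    {G : ℝ → X →ᵇ E} {a b : ℝ} (hab : a ≤ b) (hG : ContinuousOn G (Icc a b))
    (hF : ∀ x, ∀ t ∈ Icc a b, HasDerivAt (F · x) (G t x) t) :
    eLpNorm (F b - F a) p μ ≤ ENNReal.ofReal (∫ t in a..b, (eLpNorm (G t) p μ).toReal) := by
  rw [← uIcc_of_le hab] at hG hF
  have hGi : IntervalIntegrable G volume a b := hG.intervalIntegrable
  have hFG : F b - F a = ⇑(∫ t in a..b, G t) := by
    funext x
    rw [Pi.sub_apply, ← evalCLM_apply ℝ x, ← (evalCLM ℝ x).intervalIntegral_comp_comm hGi]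
    exact (intervalIntegral.integral_eq_sub_of_hasDerivAt (hF x)
      ((evalCLM ℝ x).continuous.comp_continuousOn hG).intervalIntegrable).symm
  calc eLpNorm (F b - F a) p μ = ‖∫ t in a..b, toLp p μ ℝ (G t)‖ₑ := by
        rw [hFG, ← enorm_toLp, (toLp p μ ℝ).intervalIntegral_comp_comm hGi]
    _ ≤ ENNReal.ofReal (∫ t in a..b, ‖toLp p μ ℝ (G t)‖) := by
        rw [← ofReal_norm]
        exact ENNReal.ofReal_le_ofReal (intervalIntegral.norm_integral_le_integral_norm hab)
    _ = ENNReal.ofReal (∫ t in a..b, (eLpNorm (G t) p μ).toReal) := by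
        simp_rw [← toReal_enorm, enorm_toLp]

end Minkowski

theorem dist_circleMap_circleMap (c : ℂ) (s t θ : ℝ) :
    dist (circleMap c s θ) (circleMap c t θ) = dist s t := by
  simp [circleMap, dist_eq_norm, ← sub_mul, ← Complex.ofReal_sub]

theorem exists_continuous_bcf_comp_circleMap {E : Type*} [NormedAddCommGroup E] {g : ℂ → E}
    {c : ℂ} {R b : ℝ} (hg : ContinuousOn g (ball c R)) (hb0 : 0 ≤ b) (hbR : b < R) :
    ∃ G : ℝ → ℝ →ᵇ E, Continuous G ∧ ∀ t ∈ Icc 0 b, ⇑(G t) = g ∘ circleMap c t := by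
  have hK : ContinuousOn g (closedBall c b) := hg.mono (closedBall_subset_ball hbR)
  obtain ⟨M, hM⟩ := (isCompact_closedBall c b).exists_bound_of_continuousOn hK
  have hgu := (isCompact_closedBall c b).uniformContinuousOn_of_continuous hK
  -- Clamping the radius to `[0, b]` keeps every circle inside `closedBall c b`.
  let T (t : ℝ) : ℝ := projIcc 0 b hb0 t
  have hT (t θ : ℝ) : circleMap c (T t) θ ∈ closedBall c b :=
    closedBall_subset_closedBall (projIcc 0 b hb0 t).2.2
      (circleMap_mem_closedBall c (projIcc 0 b hb0 t).2.1 θ)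
  let G (t : ℝ) : ℝ →ᵇ E := .ofNormedAddCommGroup (g ∘ circleMap c (T t))
    (hK.comp_continuous (continuous_circleMap c _) (hT t)) M fun θ => hM _ (hT t θ)
  refine ⟨G, ?_, fun t ht => by simp [G, T, projIcc_of_mem hb0 ht]⟩
  refine (Metric.uniformContinuous_iff.mpr fun ε hε => ?_).continuous
  obtain ⟨δ, hδ, hδε⟩ := Metric.uniformContinuousOn_iff.mp hgu (ε / 2) (half_pos hε)
  refine ⟨δ, hδ, fun {s t} hst => ?_⟩
  have hTst : dist (T s) (T t) < δ :=
    ((LipschitzWith.projIcc hb0).dist_le_mul s t).trans_lt (by simpa using hst)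
  calc dist (G s) (G t) ≤ ε / 2 :=
        (BoundedContinuousFunction.dist_le (half_pos hε).le).mpr fun θ =>
          (hδε _ (hT s θ) _ (hT t θ) (by rwa [dist_circleMap_circleMap])).le
    _ < ε := half_lt_self hε

local notation "μ𝕋" => volume.restrict (Ioc (-π) π)

theorem memLp_comp_circleMap {E : Type*} [NormedAddCommGroup E] {g : ℂ → E} {r : ℝ}
    (hg : ContinuousOn g (sphere 0 |r|)) (q : ℝ≥0∞) : MemLp (g ∘ circleMap 0 r) q μ𝕋 := by
  obtain ⟨M, hM⟩ := (isCompact_sphere (0 : ℂ) |r|).exists_bound_of_continuousOn hg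
  exact .of_bound (hg.comp_continuous (continuous_circleMap 0 r)
    (circleMap_mem_sphere' 0 r)).aestronglyMeasurable M
    (ae_of_all _ fun θ => hM _ (circleMap_mem_sphere' 0 r θ))

theorem Mp_eq_eLpNorm {p : ℝ} (hp : 0 < p) {g : ℂ → ℂ} {r : ℝ}
    (hg : ContinuousOn g (sphere 0 |r|)) :
    Mp p g r = (1 / (2 * π)) ^ (1 / p) * (eLpNorm (g ∘ circleMap 0 r) (.ofReal p) μ𝕋).toReal := by
  rw [(memLp_comp_circleMap hg _).eLpNorm_eq_integral_rpow_norm (by simpa using hp)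
      ENNReal.ofReal_ne_top,
    ENNReal.toReal_ofReal (by positivity), ENNReal.toReal_ofReal hp.le, Mp,
    intervalIntegral.integral_of_le (by linarith [pi_pos]),
    Real.mul_rpow (by positivity) (integral_nonneg fun θ => by positivity)]
  simp [circleMap, one_div]

theorem Mp_nonneg (p : ℝ) (g : ℂ → ℂ) (r : ℝ) : 0 ≤ Mp p g r :=
  Real.rpow_nonneg (mul_nonneg (by positivity)
    (intervalIntegral.integral_nonneg (by linarith [pi_pos]) fun θ _ => by positivity)) _

theorem Mp_const {p : ℝ} (hp : p ≠ 0) (c : ℂ) (r : ℝ) : Mp p (fun _ => c) r = ‖c‖ := by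
  have : 0 < π := pi_pos
  rw [Mp, intervalIntegral.integral_const, smul_eq_mul]
  field_simp
  ring_nf
  exact Real.rpow_rpow_inv (norm_nonneg c) hp

theorem Mp_add_le {p : ℝ} (hp : 1 ≤ p) {g h : ℂ → ℂ} {r : ℝ}
    (hg : ContinuousOn g (sphere 0 |r|)) (hh : ContinuousOn h (sphere 0 |r|)) :
    Mp p (g + h) r ≤ Mp p g r + Mp p h r := by
  have hp0 : 0 < p := by linarith
  have hg' := memLp_comp_circleMap hg (.ofReal p)
  have hh' := memLp_comp_circleMap hh (.ofReal p)
  rw [Mp_eq_eLpNorm hp0 (hg.add hh), Mp_eq_eLpNorm hp0 hg, Mp_eq_eLpNorm hp0 hh, ← mul_add,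
    ← ENNReal.toReal_add hg'.eLpNorm_ne_top hh'.eLpNorm_ne_top]
  gcongr
  · exact ENNReal.add_ne_top.mpr ⟨hg'.eLpNorm_ne_top, hh'.eLpNorm_ne_top⟩
  · exact eLpNorm_add_le hg'.1 hh'.1 (by simpa using hp)

theorem Mp_le_Mp_sub_add_norm {p : ℝ} (hp : 1 ≤ p) {g : ℂ → ℂ} {r : ℝ}
    (hg : ContinuousOn g (sphere 0 |r|)) : Mp p g r ≤ Mp p (fun z => g z - g 0) r + ‖g 0‖ := by
  have h := Mp_add_le (g := fun z => g z - g 0) hp (hg.sub continuousOn_const)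
    (continuousOn_const (c := g 0))
  rwa [Mp_const (by linarith), show ((fun z => g z - g 0) + fun _ => g 0) = g by
    funext z; simp] at h

theorem Mp_comp_mul (p : ℝ) (g : ℂ → ℂ) (r s : ℝ) :
    Mp p (fun z => g (r * z)) s = Mp p g (r * s) := by
  simp only [Mp, Complex.ofReal_mul, mul_assoc]

theorem Mp_sub_comm (p : ℝ) (g h : ℂ → ℂ) (r : ℝ) :
    Mp p (fun z => g z - h z) r = Mp p (fun z => h z - g z) r := by
  simp only [Mp, norm_sub_rev]

theorem Mp_sub_eq_Mp_sub_comp_mul (p : ℝ) (f : ℂ → ℂ) (r s : ℝ) :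
    Mp p (fun z => f (r * z) - f z) s = Mp p (fun z => f (s * z) - f ((r * s : ℝ) * z)) 1 := by
  rw [Mp_sub_comm, ← mul_one s, ← Mp_comp_mul]
  simp only [mul_one, Complex.ofReal_mul, mul_comm (r : ℂ), mul_assoc]

theorem continuousOn_Mp {p : ℝ} (hp : 1 ≤ p) {g : ℂ → ℂ} (hg : ContinuousOn g (ball 0 1)) :
    ContinuousOn (Mp p g) (Ico 0 1) := by
  have : Fact (1 ≤ ENNReal.ofReal p) := ⟨ENNReal.one_le_ofReal.mpr hp⟩
  rintro t ⟨ht0, ht1⟩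
  obtain ⟨b, htb, hb1⟩ := exists_between ht1
  obtain ⟨G, hGc, hG⟩ := exists_continuous_bcf_comp_circleMap hg (ht0.trans htb.le) hb1
  have hMp : EqOn (Mp p g) (fun s =>
      (1 / (2 * π)) ^ (1 / p) * ‖BoundedContinuousFunction.toLp (.ofReal p) μ𝕋 ℝ (G s)‖)
      (Icc 0 b) := by
    intro s hs
    rw [Mp_eq_eLpNorm (by linarith) (hg.mono ?_), ← hG s hs,
      ← BoundedContinuousFunction.enorm_toLp, toReal_enorm]
    exact sphere_subset_ball (by rw [abs_of_nonneg hs.1]; linarith [hs.2])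
  exact ((Continuous.continuousOn (by fun_prop)).congr hMp t ⟨ht0, htb.le⟩).mono_of_mem_nhdsWithin
    (mem_nhdsWithin.mpr ⟨Iio b, isOpen_Iio, htb, fun s hs => ⟨hs.2.1, hs.1.le⟩⟩)

theorem DifferentiableAt.hasDerivAt_comp_circleMap_radius {f : ℂ → ℂ} {t θ : ℝ}
    (hf : DifferentiableAt ℂ f (circleMap 0 t θ)) :
    HasDerivAt (fun s : ℝ => f (circleMap 0 s θ))
      (deriv f (circleMap 0 t θ) * Complex.exp (θ * I)) t := by
  simp only [circleMap_zero] at hf ⊢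
  exact (hf.hasDerivAt.comp (t : ℂ) (hasDerivAt_mul_const (Complex.exp (θ * I)))).comp_ofReal

theorem eLpNorm_comp_circleMap_sub_le {p : ℝ} (hp : 1 ≤ p) {f : ℂ → ℂ}
    (hf : DifferentiableOn ℂ f (ball 0 1)) {a b : ℝ} (ha : 0 ≤ a) (hab : a ≤ b) (hb : b < 1) :
    eLpNorm (f ∘ circleMap 0 b - f ∘ circleMap 0 a) (.ofReal p) μ𝕋 ≤
      .ofReal (∫ t in a..b, (eLpNorm (deriv f ∘ circleMap 0 t) (.ofReal p) μ𝕋).toReal) := by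
  have : Fact (1 ≤ ENNReal.ofReal p) := ⟨ENNReal.one_le_ofReal.mpr hp⟩
  obtain ⟨G, hGc, hG⟩ :=
    exists_continuous_bcf_comp_circleMap (hf.deriv isOpen_ball).continuousOn (ha.trans hab) hb
  let e : ℝ →ᵇ ℂ := .ofNormedAddCommGroup (fun θ => exp (θ * I)) (by fun_prop) 1
    fun θ => (norm_exp_ofReal_mul_I θ).le
  have hderiv : ∀ θ, ∀ t ∈ Icc a b,
      HasDerivAt (fun s : ℝ => f (circleMap 0 s θ)) ((G t * e) θ) t := by
    intro θ t ht
    have hz : circleMap 0 t θ ∈ ball 0 1 := by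
      simpa [abs_of_nonneg (ha.trans ht.1)] using ht.2.trans_lt hb
    simpa [e, hG t ⟨ha.trans ht.1, ht.2⟩] using
      (hf.differentiableAt (isOpen_ball.mem_nhds hz)).hasDerivAt_comp_circleMap_radius
  refine (eLpNorm_sub_le_integral_eLpNorm_of_hasDerivAt (G := fun t => G t * e) hab
    (hGc.mul continuous_const).continuousOn hderiv).trans_eq ?_
  congr 1
  refine intervalIntegral.integral_congr fun t ht => ?_
  rw [uIcc_of_le hab] at ht
  rw [← hG t ⟨ha.trans ht.1, ht.2⟩]
  exact congrArg _ (eLpNorm_congr_norm_ae (ae_of_all _ fun θ => by simp [e]))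

theorem Mp_sub_le_integral_Mp_deriv {p : ℝ} (hp : 1 ≤ p) {f : ℂ → ℂ}
    (hf : DifferentiableOn ℂ f (ball 0 1)) {a b : ℝ} (ha : 0 ≤ a) (hab : a ≤ b) (hb : b < 1) :
    Mp p (fun z => f (b * z) - f (a * z)) 1 ≤ ∫ t in a..b, Mp p (deriv f) t := by
  have hp0 : 0 < p := by linarith
  have hsphere : ∀ t ∈ Icc a b, sphere (0 : ℂ) |t| ⊆ ball 0 1 := fun t ht =>
    sphere_subset_ball (by rw [abs_of_nonneg (ha.trans ht.1)]; linarith [ht.2])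
  have hscale : ∀ c ∈ Icc a b, ContinuousOn (fun z : ℂ => f (c * z)) (sphere 0 |1|) :=
    fun c hc => hf.continuousOn.comp (by fun_prop) fun z hz => hsphere c hc (by simp_all)
  have hcomp : (fun z => f (b * z) - f (a * z)) ∘ circleMap 0 1 =
      f ∘ circleMap 0 b - f ∘ circleMap 0 a := by
    funext θ
    simp [circleMap]
  rw [Mp_eq_eLpNorm (g := fun z => f (b * z) - f (a * z)) hp0
      ((hscale b ⟨hab, le_rfl⟩).sub (hscale a ⟨le_rfl, hab⟩)), hcomp]
  calc _ ≤ (1 / (2 * π)) ^ (1 / p) *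
        ∫ t in a..b, (eLpNorm (deriv f ∘ circleMap 0 t) (.ofReal p) μ𝕋).toReal := by
        gcongr
        exact ENNReal.toReal_le_of_le_ofReal
          (intervalIntegral.integral_nonneg hab fun t _ => ENNReal.toReal_nonneg)
          (eLpNorm_comp_circleMap_sub_le hp hf ha hab hb)
    _ = ∫ t in a..b, Mp p (deriv f) t := by
        rw [← intervalIntegral.integral_const_mul]
        refine intervalIntegral.integral_congr fun t ht => ?_
        rw [uIcc_of_le hab] at ht
        exact (Mp_eq_eLpNorm hp0 ((hf.deriv isOpen_ball).continuousOn.mono (hsphere t ht))).symm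

theorem exists_le_add_mul_rpow_of_isBigO {φ : ℝ → ℝ} {β : ℝ} (hφ : ContinuousOn φ (Ico 0 1))
    (hO : φ =O[𝓝[<] 1] fun t => (1 - t) ^ β) :
    ∃ A B : ℝ, 0 ≤ A ∧ 0 ≤ B ∧ ∀ t ∈ Ico 0 1, φ t ≤ A + B * (1 - t) ^ β := by
  obtain ⟨B, hB0, hB⟩ := hO.exists_nonneg
  obtain ⟨r₀, hr₀, hsub⟩ := (mem_nhdsLT_iff_exists_Ioo_subset' zero_lt_one).mp hB.bound
  obtain ⟨A, hA⟩ := (isCompact_Icc (a := 0) (b := max r₀ 0)).exists_bound_of_continuousOn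
    (hφ.mono (Icc_subset_Ico_right (max_lt hr₀ zero_lt_one)))
  refine ⟨A, B, (norm_nonneg _).trans (hA 0 ⟨le_rfl, le_max_right _ _⟩), hB0, fun t ht => ?_⟩
  have hpow : 0 ≤ (1 - t) ^ β := Real.rpow_nonneg (by linarith [ht.2]) _
  rcases le_or_gt t (max r₀ 0) with htr | htr
  · have := (le_norm_self _).trans (hA t ⟨ht.1, htr⟩)
    nlinarith
  · have := (le_norm_self _).trans (hsub ⟨(le_max_left _ _).trans_lt htr, ht.2⟩)
    rw [Real.norm_of_nonneg hpow] at this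
    nlinarith [(norm_nonneg _).trans (hA 0 ⟨le_rfl, le_max_right _ _⟩)]

theorem intervalIntegrable_one_sub_rpow {β : ℝ} (hβ : -1 < β) (a b : ℝ) :
    IntervalIntegrable (fun t => (1 - t) ^ β) volume a b := by
  simpa using
    (intervalIntegral.intervalIntegrable_rpow' (a := 1 - a) (b := 1 - b) hβ).comp_sub_left 1

theorem integral_one_sub_rpow_sub_one {β : ℝ} (hβ : 0 < β) (a b : ℝ) :
    ∫ t in a..b, (1 - t) ^ (β - 1) = ((1 - a) ^ β - (1 - b) ^ β) / β := by
  rw [intervalIntegral.integral_comp_sub_left (fun t => t ^ (β - 1)),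
    integral_rpow (Or.inl (by linarith)), sub_add_cancel]

theorem integral_le_of_le_add_mul_rpow {φ : ℝ → ℝ} {A B β a b : ℝ} (hβ : 0 < β)
    (hφ : ContinuousOn φ (Ico 0 1)) (hle : ∀ t ∈ Ico 0 1, φ t ≤ A + B * (1 - t) ^ (β - 1))
    (ha : 0 ≤ a) (hab : a ≤ b) (hb : b < 1) :
    ∫ t in a..b, φ t ≤ A * (b - a) + B * (((1 - a) ^ β - (1 - b) ^ β) / β) := by
  have hmaj : IntervalIntegrable (fun t => A + B * (1 - t) ^ (β - 1)) volume a b :=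
    intervalIntegrable_const.add ((intervalIntegrable_one_sub_rpow (by linarith) a b).const_mul B)
  have hφi : IntervalIntegrable φ volume a b :=
    (hφ.mono (by rw [uIcc_of_le hab]; exact Icc_subset_Ico ha hb)).intervalIntegrable
  calc ∫ t in a..b, φ t ≤ ∫ t in a..b, (A + B * (1 - t) ^ (β - 1)) :=
        intervalIntegral.integral_mono_on hab hφi hmaj fun t ht =>
          hle t ⟨ha.trans ht.1, ht.2.trans_lt hb⟩
    _ = A * (b - a) + B * (((1 - a) ^ β - (1 - b) ^ β) / β) := by
        rw [intervalIntegral.integral_add intervalIntegrable_const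
            ((intervalIntegrable_one_sub_rpow (by linarith) a b).const_mul B),
          intervalIntegral.integral_const, intervalIntegral.integral_const_mul,
          integral_one_sub_rpow_sub_one hβ, smul_eq_mul, mul_comm]

theorem sub_mul_le_one_sub_rpow {α r s : ℝ} (hα1 : α ≤ 1) (hr0 : 0 ≤ r) (hr1 : r ≤ 1)
    (hs1 : s ≤ 1) : s - r * s ≤ (1 - r) ^ α := by
  calc s - r * s = s * (1 - r) := by ring
    _ ≤ 1 - r := mul_le_of_le_one_left (by linarith) hs1
    _ ≤ (1 - r) ^ α := Real.self_le_rpow_of_le_one (by linarith) (by linarith) hα1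

theorem one_sub_mul_rpow_sub_le {α r s : ℝ} (hα0 : 0 ≤ α) (hα1 : α ≤ 1) (hr1 : r ≤ 1)
    (hs0 : 0 ≤ s) (hs1 : s ≤ 1) :
    (1 - r * s) ^ α - (1 - s) ^ α ≤ (1 - r) ^ α := by
  have hsub := Real.rpow_add_le_add_rpow (by linarith : 0 ≤ 1 - s)
    (mul_nonneg hs0 (by linarith : 0 ≤ 1 - r)) hα0 hα1
  have hmono : (s * (1 - r)) ^ α ≤ (1 - r) ^ α :=
    Real.rpow_le_rpow (mul_nonneg hs0 (by linarith)) (mul_le_of_le_one_left (by linarith) hs1) hα0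
  rw [show 1 - s + s * (1 - r) = 1 - r * s by ring] at hsub
  linarith

theorem Mp_sub_le_mul_one_sub_rpow {p α A B : ℝ} (hp : 1 ≤ p) (hα : 0 < α) (hα1 : α ≤ 1)
    (hA : 0 ≤ A) (hB : 0 ≤ B) {f : ℂ → ℂ} (hf : DifferentiableOn ℂ f (ball 0 1))
    (hle : ∀ t ∈ Ico 0 1, Mp p (deriv f) t ≤ A + B * (1 - t) ^ (α - 1)) {r s : ℝ}
    (hr0 : 0 ≤ r) (hr1 : r ≤ 1) (hs : s ∈ Ico 0 1) :
    Mp p (fun z => f (r * z) - f z) s ≤ (A + B / α) * (1 - r) ^ α := by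
  obtain ⟨hs0, hs1⟩ := hs
  have hrs0 : 0 ≤ r * s := mul_nonneg hr0 hs0
  have hrs : r * s ≤ s := mul_le_of_le_one_left hs0 hr1
  rw [Mp_sub_eq_Mp_sub_comp_mul]
  calc _ ≤ ∫ t in r * s..s, Mp p (deriv f) t := Mp_sub_le_integral_Mp_deriv hp hf hrs0 hrs hs1
    _ ≤ A * (s - r * s) + B * (((1 - r * s) ^ α - (1 - s) ^ α) / α) :=
        integral_le_of_le_add_mul_rpow hα (continuousOn_Mp hp (hf.deriv isOpen_ball).continuousOn)
          hle hrs0 hrs hs1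
    _ ≤ A * (1 - r) ^ α + B * ((1 - r) ^ α / α) := by
        gcongr
        exacts [sub_mul_le_one_sub_rpow hα1 hr0 hr1 hs1.le,
          one_sub_mul_rpow_sub_le hα.le hα1 hr1 hs0 hs1.le]
    _ = (A + B / α) * (1 - r) ^ α := by ring

theorem stmt3 (p α : ℝ) (hp : 1 ≤ p) (hα : 0 < α) (hα1 : α ≤ 1) (f : ℂ → ℂ)
    (hf : AnalyticOn ℂ f (ball (0 : ℂ) 1))
    (hO : (fun r : ℝ => Mp p (deriv f) r) =O[𝓝[<] (1 : ℝ)] (fun r => (1 - r) ^ (α - 1))) :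
    MemHp p f ∧
      (fun r : ℝ => hardyNorm p (fun z => f ((r : ℂ) * z) - f z))
        =O[𝓝[<] (1 : ℝ)] (fun r => (1 - r) ^ α) := by
  have hfd : DifferentiableOn ℂ f (ball 0 1) := hf.differentiableOn
  obtain ⟨A, B, hA, hB, hle⟩ :=
    exists_le_add_mul_rpow_of_isBigO (continuousOn_Mp hp (hfd.deriv isOpen_ball).continuousOn) hO
  have hMp_sub {r s : ℝ} (hr0 : 0 ≤ r) (hr1 : r ≤ 1) (hs : s ∈ Ico 0 1) :=
    Mp_sub_le_mul_one_sub_rpow hp hα hα1 hA hB hfd hle hr0 hr1 hs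
  refine ⟨⟨hf, ‖f 0‖ + (A + B / α), ?_⟩, isBigO_iff.mpr ⟨A + B / α, ?_⟩⟩
  · rintro _ ⟨⟨s, hs⟩, rfl⟩
    have hsphere : sphere (0 : ℂ) |s| ⊆ ball 0 1 :=
      sphere_subset_ball (by rw [abs_of_nonneg hs.1]; exact hs.2)
    calc Mp p f s ≤ Mp p (fun z => f z - f 0) s + ‖f 0‖ :=
          Mp_le_Mp_sub_add_norm hp (hf.continuousOn.mono hsphere)
      _ ≤ ‖f 0‖ + (A + B / α) := by
          have h0 := hMp_sub le_rfl zero_le_one hs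
          rw [Mp_sub_comm] at h0
          simp only [Complex.ofReal_zero, zero_mul, sub_zero, Real.one_rpow, mul_one] at h0
          linarith
  · filter_upwards [Ioo_mem_nhdsLT zero_lt_one] with r hr
    have : Nonempty (Ico (0 : ℝ) 1) := (nonempty_Ico.mpr zero_lt_one).to_subtype
    rw [hardyNorm, Real.norm_of_nonneg (Real.iSup_nonneg fun s => Mp_nonneg _ _ _),
      Real.norm_of_nonneg (Real.rpow_nonneg (by linarith [hr.2]) _)]
    exact ciSup_le fun s => hMp_sub hr.1.le hr.2.le s.2
end

section
/- Let 1 ≤ p < ∞ and 0 < α ≤ 1. If f is analytic on the unit disc and the Bergman area mean of its derivative satisfies A_p(r, f') ≤ C(1-r)^{α-1} for all 0 < r < 1, then f belongs to the Bergman space A^p, with ‖f - f(0)‖_{A^p} ≤ C/α. -/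
open Complex MeasureTheory Real Metric Set Filter Topology Asymptotics

open scoped ENNReal

/-
Since `f z - f 0 = ∫₀¹ z f'(tz) dt`, Minkowski's integral inequality bounds the `A^p` norm of
`f - f 0` by `∫₀¹ A_p(t, f') dt ≤ C ∫₀¹ (1 - t)^(α - 1) dt = C / α`. Minkowski's inequality is
proved in `ℝ≥0∞`, so that no finiteness of the left-hand side is needed in advance: with
`N x = ‖g x ·‖_p`, it is Jensen's inequality for the measure `N dμ` applied to `g / N`, followed
by Tonelli.
-/

namespace ENNReal

variable {X Y : Type*} [MeasurableSpace X] [MeasurableSpace Y] {μ : Measure X} {ν : Measure Y}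
  {p : ℝ}

theorem rpow_lintegral_mul_le (hp : 1 ≤ p) {w F : X → ℝ≥0∞} (hw : Measurable w)
    (hF : Measurable F) :
    (∫⁻ x, w x * F x ∂μ) ^ p ≤ (∫⁻ x, w x ∂μ) ^ (p - 1) * ∫⁻ x, w x * F x ^ p ∂μ := by
  have h := eLpNorm'_le_eLpNorm'_mul_rpow_measure_univ (μ := μ.withDensity w) one_pos hp
    hF.aestronglyMeasurable
  simp only [eLpNorm', enorm_eq_self, rpow_one, div_one] at h
  rw [lintegral_withDensity_eq_lintegral_mul _ hw hF,
    lintegral_withDensity_eq_lintegral_mul _ hw (hF.pow_const p), withDensity_apply _ .univ,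
    Measure.restrict_univ] at h
  have hp0 : 0 ≤ p := zero_le_one.trans hp
  calc (∫⁻ x, w x * F x ∂μ) ^ p
      ≤ ((∫⁻ x, w x * F x ^ p ∂μ) ^ (1 / p) * (∫⁻ x, w x ∂μ) ^ (1 - 1 / p)) ^ p := by
        simpa only [Pi.mul_apply] using rpow_le_rpow h hp0
    _ = (∫⁻ x, w x ∂μ) ^ (p - 1) * ∫⁻ x, w x * F x ^ p ∂μ := by
        have hp0' : p ≠ 0 := by positivity
        rw [mul_rpow_of_nonneg _ _ hp0, ← rpow_mul, ← rpow_mul, one_div_mul_cancel hp0', rpow_one,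
          mul_comm, sub_mul, one_div_mul_cancel hp0', one_mul]

theorem lintegral_Lp_lintegral_le [SFinite μ] [SFinite ν] (hp : 1 ≤ p) {g : X → Y → ℝ≥0∞}
    (hg : Measurable (Function.uncurry g)) :
    (∫⁻ y, (∫⁻ x, g x y ∂μ) ^ p ∂ν) ^ (1 / p) ≤ ∫⁻ x, (∫⁻ y, g x y ^ p ∂ν) ^ (1 / p) ∂μ := by
  have hp0 : 0 < p := zero_lt_one.trans_le hp
  set N : X → ℝ≥0∞ := fun x => (∫⁻ y, g x y ^ p ∂ν) ^ (1 / p) with hN_def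
  have hN : Measurable N := ((hg.pow_const p).lintegral_prod_right').pow_const _
  have hgx : ∀ x, Measurable (g x) := fun x => hg.comp measurable_prodMk_left
  have hgy : ∀ y, Measurable (g · y) := fun y => hg.comp measurable_prodMk_right
  rcases eq_or_ne (∫⁻ x, N x ∂μ) ∞ with hI | hI
  · exact hI ▸ le_top
  have hN_pow : ∀ x, N x ^ p = ∫⁻ y, g x y ^ p ∂ν := fun x => by
    rw [hN_def, ← rpow_mul, one_div_mul_cancel hp0.ne', rpow_one]
  -- The identity fails only where `N x = ∞` (a null set) or where `N x = 0 < g x y` (for each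
  -- such `x`, a null set of `y`).
  have hfactor : ∀ᵐ y ∂ν, ∀ᵐ x ∂μ, g x y = N x * (g x y / N x) := by
    refine (Measure.ae_ae_comm (p := fun x y => g x y = N x * (g x y / N x))
      (measurableSet_eq_fun hg ((hN.comp measurable_fst).mul
        (hg.div (hN.comp measurable_fst))))).1 ?_
    filter_upwards [ae_lt_top hN hI] with x hx
    rcases eq_or_ne (N x) 0 with h0 | h0
    · have : ∫⁻ y, g x y ^ p ∂ν = 0 := by rw [← hN_pow, h0, zero_rpow_of_pos hp0]
      filter_upwards [(lintegral_eq_zero_iff ((hgx x).pow_const p)).1 this] with y hy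
      rw [(rpow_eq_zero_iff_of_pos hp0).1 hy, ENNReal.zero_div, mul_zero]
    · exact .of_forall fun y => (ENNReal.mul_div_cancel h0 hx.ne).symm
  calc (∫⁻ y, (∫⁻ x, g x y ∂μ) ^ p ∂ν) ^ (1 / p)
      = (∫⁻ y, (∫⁻ x, N x * (g x y / N x) ∂μ) ^ p ∂ν) ^ (1 / p) := by
        congr 1
        refine lintegral_congr_ae ?_
        filter_upwards [hfactor] with y hy
        rw [lintegral_congr_ae hy]
    _ ≤ (∫⁻ y, (∫⁻ x, N x ∂μ) ^ (p - 1) * ∫⁻ x, N x * (g x y / N x) ^ p ∂μ ∂ν) ^ (1 / p) := by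
        gcongr with y
        exact rpow_lintegral_mul_le hp hN ((hgy y).div hN)
    _ = ((∫⁻ x, N x ∂μ) ^ (p - 1) * ∫⁻ x, N x * ∫⁻ y, (g x y / N x) ^ p ∂ν ∂μ) ^ (1 / p) := by
        have hH : Measurable (Function.uncurry fun x y => N x * (g x y / N x) ^ p) :=
          (hN.comp measurable_fst).mul ((hg.div (hN.comp measurable_fst)).pow_const p)
        have hHy : Measurable fun y => ∫⁻ x, N x * (g x y / N x) ^ p ∂μ :=
          hH.lintegral_prod_left'
        rw [lintegral_const_mul _ hHy, ← lintegral_lintegral_swap hH.aemeasurable]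
        congr 3 with x
        exact lintegral_const_mul _ (((hgx x).div_const _).pow_const p)
    _ ≤ ((∫⁻ x, N x ∂μ) ^ (p - 1) * ∫⁻ x, N x ∂μ) ^ (1 / p) := by
        gcongr with x
        calc N x * ∫⁻ y, (g x y / N x) ^ p ∂ν = N x * (N x ^ p / N x ^ p) := by
              simp_rw [div_rpow_of_nonneg _ _ hp0.le, div_eq_mul_inv]
              rw [lintegral_mul_const _ ((hgx x).pow_const p), hN_pow]
          _ ≤ N x := mul_le_of_le_one_right' ENNReal.div_self_le_one
    _ = ∫⁻ x, N x ∂μ := by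
        nth_rw 2 [← rpow_one (∫⁻ x, N x ∂μ)]
        rw [← rpow_add_of_nonneg _ _ (by linarith) zero_le_one, sub_add_cancel, ← rpow_mul,
          mul_one_div_cancel hp0.ne', rpow_one]

end ENNReal

instance isFiniteMeasure_restrict_ball {X : Type*} [PseudoMetricSpace X] [ProperSpace X]
    [MeasurableSpace X] {μ : Measure X} [IsFiniteMeasureOnCompacts μ] (x : X) (r : ℝ) :
    IsFiniteMeasure (μ.restrict (ball x r)) :=
  isFiniteMeasure_restrict.2 measure_ball_lt_top.ne

theorem AnalyticOnNhd.enorm_sub_le_lintegral_deriv {E : Type*} [NormedAddCommGroup E]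
    [NormedSpace ℂ E] [CompleteSpace E] {f : ℂ → E} {r : ℝ}
    (hf : AnalyticOnNhd ℂ f (ball 0 r)) {z : ℂ} (hz : z ∈ ball 0 r) :
    ‖f z - f 0‖ₑ ≤ ‖z‖ₑ * ∫⁻ t in Ioo (0 : ℝ) 1, ‖deriv f (t * z)‖ₑ := by
  have hseg : ∀ t ∈ uIcc (0 : ℝ) 1, (t : ℂ) * z ∈ ball 0 r := fun t ht => by
    rw [uIcc_of_le zero_le_one] at ht
    rw [mem_ball_zero_iff] at hz ⊢
    calc ‖(t : ℂ) * z‖ = |t| * ‖z‖ := by rw [norm_mul, norm_real, Real.norm_eq_abs]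
      _ ≤ 1 * ‖z‖ := by gcongr; exact abs_le.2 ⟨by linarith [ht.1], ht.2⟩
      _ < r := by rwa [one_mul]
  have hderiv : ∀ t ∈ uIcc (0 : ℝ) 1,
      HasDerivAt (fun s : ℝ => f (s * z)) (z • deriv f (t * z)) t := fun t ht =>
    HasDerivAt.scomp (h := fun s : ℝ => (s : ℂ) * z) t
      (hf _ (hseg t ht)).differentiableAt.hasDerivAt (hasDerivAt_mul_const z).comp_ofReal
  have hcont : ContinuousOn (fun t : ℝ => z • deriv f (t * z)) (uIcc 0 1) :=
    continuousOn_const.smul (hf.deriv.continuousOn.comp (by fun_prop) hseg)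
  have hFTC := intervalIntegral.integral_eq_sub_of_hasDerivAt hderiv hcont.intervalIntegrable
  rw [intervalIntegral.integral_of_le zero_le_one,
    ← Measure.restrict_congr_set Ioo_ae_eq_Ioc] at hFTC
  push_cast at hFTC
  rw [one_mul, zero_mul] at hFTC
  rw [← hFTC, ← lintegral_const_mul' _ _ enorm_ne_top]
  refine (enorm_integral_le_lintegral_enorm _).trans_eq ?_
  simp_rw [enorm_smul]

theorem lintegral_ofReal_one_sub_rpow {α : ℝ} (hα : 0 < α) :
    ∫⁻ t in Ioo (0 : ℝ) 1, .ofReal ((1 - t) ^ (α - 1)) = .ofReal α⁻¹ := by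
  have hint : IntervalIntegrable (fun t : ℝ => (1 - t) ^ (α - 1)) volume 0 1 := by
    have h : IntervalIntegrable (fun s : ℝ => s ^ (α - 1)) volume 0 1 :=
      intervalIntegral.intervalIntegrable_rpow' (by linarith)
    simpa using (h.comp_sub_left 1).symm
  have hval : ∫ t in (0 : ℝ)..1, (1 - t) ^ (α - 1) = α⁻¹ := by
    rw [intervalIntegral.integral_comp_sub_left (fun s : ℝ => s ^ (α - 1)) 1, sub_self, sub_zero,
      integral_rpow (Or.inl (by linarith)), sub_add_cancel, zero_rpow hα.ne', one_rpow]
    norm_num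
  rw [intervalIntegral.integral_of_le zero_le_one,
    ← Measure.restrict_congr_set Ioo_ae_eq_Ioc] at hval
  rw [← hval, ofReal_integral_eq_lintegral_ofReal]
  · exact (intervalIntegrable_iff_integrableOn_Ioo_of_le zero_le_one).1 hint
  · filter_upwards [ae_restrict_mem measurableSet_Ioo] with t ht
    exact rpow_nonneg (by linarith [ht.2]) _

theorem ContinuousOn.memLp_comp_mul {E : Type*} [NormedAddCommGroup E] {f : ℂ → E}
    (hf : ContinuousOn f (ball 0 1)) {t : ℝ} (ht0 : 0 ≤ t) (ht1 : t < 1) (q : ℝ≥0∞) :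
    MemLp (fun z => f (t * z)) q (volume.restrict (ball (0 : ℂ) 1)) := by
  have hmaps : MapsTo (fun z : ℂ => (t : ℂ) * z) (closedBall 0 1) (ball 0 1) := fun z hz => by
    rw [mem_closedBall_zero_iff] at hz
    rw [mem_ball_zero_iff, norm_mul, norm_real, Real.norm_of_nonneg ht0]
    nlinarith [norm_nonneg z]
  have hcont : ContinuousOn (fun z => f (t * z)) (closedBall 0 1) :=
    hf.comp (by fun_prop) hmaps
  obtain ⟨M, hM⟩ := (isCompact_closedBall (0 : ℂ) 1).exists_bound_of_continuousOn hcont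
  refine .of_bound
    ((hcont.mono ball_subset_closedBall).aestronglyMeasurable measurableSet_ball) M ?_
  filter_upwards [ae_restrict_mem measurableSet_ball] with z hz
  exact hM z (ball_subset_closedBall hz)

theorem bergmanNorm_nonneg (p : ℝ) (g : ℂ → ℂ) : 0 ≤ bergmanNorm p g :=
  rpow_nonneg (mul_nonneg (inv_nonneg.2 pi_pos.le)
    (setIntegral_nonneg measurableSet_ball fun _ _ => by positivity)) _

theorem pi_rpow_mul_bergmanNorm {p : ℝ} (hp : 0 < p) {g : ℂ → ℂ}
    (hg : AEStronglyMeasurable g (volume.restrict (ball (0 : ℂ) 1))) :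
    π ^ (1 / p) * bergmanNorm p g =
      (eLpNorm g (.ofReal p) (volume.restrict (ball (0 : ℂ) 1))).toReal := by
  rw [toReal_eLpNorm hg, lpNorm_eq_integral_norm_rpow_toReal (by simpa using hp)
    ENNReal.ofReal_ne_top hg, ENNReal.toReal_ofReal hp.le, bergmanNorm,
    mul_rpow (inv_nonneg.2 pi_pos.le)
      (setIntegral_nonneg measurableSet_ball fun _ _ => by positivity),
    ← mul_assoc, ← mul_rpow pi_pos.le (inv_nonneg.2 pi_pos.le), mul_inv_cancel₀ pi_ne_zero,
    one_rpow, one_mul, one_div]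

theorem ContinuousOn.eLpNorm_comp_mul_eq_Ap {p : ℝ} (hp : 0 < p) {g : ℂ → ℂ}
    (hg : ContinuousOn g (ball 0 1)) {t : ℝ} (ht0 : 0 ≤ t) (ht1 : t < 1) :
    eLpNorm (fun z => g (t * z)) (.ofReal p) (volume.restrict (ball (0 : ℂ) 1)) =
      .ofReal (π ^ (1 / p) * Ap p g t) := by
  have hmem := hg.memLp_comp_mul ht0 ht1 (.ofReal p)
  rw [Ap, pi_rpow_mul_bergmanNorm hp hmem.aestronglyMeasurable,
    ENNReal.ofReal_toReal hmem.eLpNorm_ne_top]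

theorem AnalyticOnNhd.eLpNorm_sub_le_of_Ap_deriv_le {p α C : ℝ} (hp : 1 ≤ p) (hα : 0 < α)
    (hC0 : 0 ≤ C) {f : ℂ → ℂ} (hf : AnalyticOnNhd ℂ f (ball 0 1))
    (hC : ∀ r ∈ Ioo (0 : ℝ) 1, Ap p (deriv f) r ≤ C * (1 - r) ^ (α - 1)) :
    eLpNorm (fun z => f z - f 0) (.ofReal p) (volume.restrict (ball (0 : ℂ) 1)) ≤
      .ofReal (π ^ (1 / p) * (C / α)) := by
  have hp0 : 0 < p := zero_lt_one.trans_le hp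
  have hLp : ∀ g : ℂ → ℂ, eLpNorm g (.ofReal p) (volume.restrict (ball (0 : ℂ) 1)) =
      (∫⁻ z in ball 0 1, ‖g z‖ₑ ^ p) ^ (1 / p) := fun g => by
    rw [eLpNorm_eq_lintegral_rpow_enorm_toReal (by simpa using hp0) ENNReal.ofReal_ne_top,
      ENNReal.toReal_ofReal hp0.le]
  rw [hLp]
  calc (∫⁻ z in ball 0 1, ‖f z - f 0‖ₑ ^ p) ^ (1 / p)
      ≤ (∫⁻ z in ball 0 1, (∫⁻ t in Ioo (0 : ℝ) 1, ‖deriv f (t * z)‖ₑ) ^ p) ^ (1 / p) := by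
        gcongr 1
        refine setLIntegral_mono' measurableSet_ball fun z hz => ?_
        gcongr
        refine (hf.enorm_sub_le_lintegral_deriv hz).trans (mul_le_of_le_one_left' ?_)
        rw [← ofReal_norm]
        exact ENNReal.ofReal_le_one.2 (mem_ball_zero_iff.1 hz).le
    _ ≤ ∫⁻ t in Ioo (0 : ℝ) 1, (∫⁻ z in ball 0 1, ‖deriv f (t * z)‖ₑ ^ p) ^ (1 / p) :=
        ENNReal.lintegral_Lp_lintegral_le hp (by fun_prop)
    _ ≤ ∫⁻ t in Ioo (0 : ℝ) 1, .ofReal (π ^ (1 / p) * C) * .ofReal ((1 - t) ^ (α - 1)) := by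
        refine setLIntegral_mono' measurableSet_Ioo fun t ht => ?_
        rw [← hLp, hf.deriv.continuousOn.eLpNorm_comp_mul_eq_Ap hp0 ht.1.le ht.2,
          ← ENNReal.ofReal_mul (by positivity), mul_assoc]
        gcongr
        exact hC t ht
    _ = .ofReal (π ^ (1 / p) * (C / α)) := by
        rw [lintegral_const_mul' _ _ ENNReal.ofReal_ne_top, lintegral_ofReal_one_sub_rpow hα,
          ← ENNReal.ofReal_mul (by positivity), mul_assoc, div_eq_mul_inv C α]

theorem stmt11_general (p α : ℝ) (hp : 1 ≤ p) (hα : 0 < α) (f : ℂ → ℂ)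
    (hf : AnalyticOn ℂ f (ball (0 : ℂ) 1)) (C : ℝ)
    (hC : ∀ r ∈ Ioo (0 : ℝ) 1, Ap p (deriv f) r ≤ C * (1 - r) ^ (α - 1)) :
    MemAp p f ∧ bergmanNorm p (fun z => f z - f 0) ≤ C / α := by
  have hp0 : 0 < p := zero_lt_one.trans_le hp
  have hC0 : 0 ≤ C := by
    have h := (bergmanNorm_nonneg _ _).trans (hC (1 / 2) (by norm_num))
    exact nonneg_of_mul_nonneg_left h (by positivity)
  have hbound := (isOpen_ball.analyticOn_iff_analyticOnNhd.1 hf).eLpNorm_sub_le_of_Ap_deriv_le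
    hp hα hC0 hC
  have hmeas : AEStronglyMeasurable (fun z => f z - f 0) (volume.restrict (ball (0 : ℂ) 1)) :=
    (hf.continuousOn.sub continuousOn_const).aestronglyMeasurable measurableSet_ball
  have hmem : MemLp (fun z => f z - f 0) (.ofReal p) (volume.restrict (ball (0 : ℂ) 1)) :=
    ⟨hmeas, hbound.trans_lt ENNReal.ofReal_lt_top⟩
  refine ⟨⟨hf, ?_⟩, ?_⟩
  · have hmem' : MemLp f (.ofReal p) (volume.restrict (ball (0 : ℂ) 1)) := by
      simpa [Pi.add_def] using hmem.add (memLp_const (f 0))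
    simpa [IntegrableOn, ENNReal.toReal_ofReal hp0.le] using
      hmem'.integrable_norm_rpow (by simpa using hp0) ENNReal.ofReal_ne_top
  · have h := ENNReal.toReal_le_of_le_ofReal (by positivity) hbound
    rw [← pi_rpow_mul_bergmanNorm hp0 hmeas] at h
    exact le_of_mul_le_mul_left h (by positivity)

theorem stmt11 (p α : ℝ) (hp : 1 ≤ p) (hα : 0 < α) (hα1 : α ≤ 1) (f : ℂ → ℂ)
    (hf : AnalyticOn ℂ f (ball (0 : ℂ) 1)) (C : ℝ)
    (hC : ∀ r ∈ Ioo (0 : ℝ) 1, Ap p (deriv f) r ≤ C * (1 - r) ^ (α - 1)) :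
    MemAp p f ∧ bergmanNorm p (fun z => f z - f 0) ≤ C / α :=
  stmt11_general p α hp hα f hf C hC
end

section
/- Let 1 ≤ p < ∞ and f ∈ A^p with ‖r_t(f) - f‖_{A^p} ≤ C|t| for all t near 0. Then f' ∈ A^p. -/
open Complex MeasureTheory Real Metric Set Filter Topology Asymptotics

/-! The difference quotients `(f(e^{it} z) - f z) / t` converge pointwise on the disc to
`i z f'(z)`, and the hypothesis bounds their `L^p` norms on the disc by `π^{1/p} C`. By Fatou's
lemma `z f'(z)` lies in `L^p` of the disc; since `f'` is bounded on the disc of radius `1/2`,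
so does `f'`. -/

theorem memAp_iff_memLp {p : ℝ} (hp : 0 < p) {f : ℂ → ℂ} :
    MemAp p f ↔ AnalyticOn ℂ f (ball 0 1) ∧
      MemLp f (ENNReal.ofReal p) (volume.restrict (ball 0 1)) := by
  refine and_congr_right fun hf => ?_
  rw [IntegrableOn, ← integrable_norm_rpow_iff
    (hf.continuousOn.aestronglyMeasurable measurableSet_ball) (by simpa using hp)
    ENNReal.ofReal_ne_top, ENNReal.toReal_ofReal hp.le]

theorem eLpNorm_eq_ofReal_bergmanNorm {p : ℝ} (hp : 0 < p) {g : ℂ → ℂ}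
    (hg : MemLp g (ENNReal.ofReal p) (volume.restrict (ball 0 1))) :
    eLpNorm g (ENNReal.ofReal p) (volume.restrict (ball 0 1)) =
      ENNReal.ofReal (π ^ (1 / p) * bergmanNorm p g) := by
  rw [hg.eLpNorm_eq_integral_rpow_norm (by simpa using hp) ENNReal.ofReal_ne_top,
    ENNReal.toReal_ofReal hp.le, bergmanNorm, ← mul_rpow pi_pos.le (by positivity),
    mul_inv_cancel_left₀ pi_ne_zero, one_div]

theorem measurePreserving_circle_mul_restrict_ball (a : Circle) (r : ℝ) :
    MeasurePreserving (fun z : ℂ => (a : ℂ) * z) (volume.restrict (ball 0 r))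
      (volume.restrict (ball 0 r)) := by
  have h := (rotation a).measurePreserving.restrict_preimage
    (measurableSet_ball (x := 0) (ε := r))
  rwa [LinearIsometryEquiv.preimage_ball, map_zero] at h

theorem eLpNorm_le_of_ae_tendsto {α E ι : Type*} [MeasurableSpace α] [NormedAddCommGroup E]
    {μ : Measure α} {p : ENNReal} {l : Filter ι} [l.NeBot] [l.IsCountablyGenerated]
    {F : ι → α → E} {g : α → E} {B : ENNReal} (hF : ∀ i, AEStronglyMeasurable (F i) μ)
    (hlim : ∀ᵐ x ∂μ, Tendsto (fun i => F i x) l (𝓝 (g x)))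
    (hB : ∀ᶠ i in l, eLpNorm (F i) p μ ≤ B) :
    eLpNorm g p μ ≤ B := by
  obtain ⟨u, hu⟩ := l.exists_seq_tendsto
  calc eLpNorm g p μ ≤ atTop.liminf fun n => eLpNorm (F (u n)) p μ :=
        Lp.eLpNorm_lim_le_liminf_eLpNorm (fun n => hF (u n)) g (hlim.mono fun x hx => hx.comp hu)
    _ ≤ B := liminf_le_of_frequently_le' (hu.eventually hB).frequently

theorem hasDerivAt_comp_exp_mul_I_mul {f : ℂ → ℂ} {z : ℂ} (hf : DifferentiableAt ℂ f z) :
    HasDerivAt (fun t : ℝ => f (exp (t * I) * z)) (deriv f z * (I * z)) 0 := by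
  have hγ : HasDerivAt (fun t : ℝ => exp (t * I) * z) (I * z) 0 := by
    simpa using (((hasDerivAt_id (0 : ℝ)).ofReal_comp.mul_const I).cexp).mul_const z
  exact hf.hasDerivAt.comp_of_eq 0 hγ (by simp)

theorem eLpNorm_smul_inv_le_of_bergmanNorm_le {p : ℝ} (hp : 0 < p) {D : ℂ → ℂ}
    (hD : MemLp D (ENNReal.ofReal p) (volume.restrict (ball 0 1))) {t C : ℝ}
    (h : bergmanNorm p D ≤ C * |t|) :
    eLpNorm (t⁻¹ • D) (ENNReal.ofReal p) (volume.restrict (ball 0 1)) ≤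
      ENNReal.ofReal (π ^ (1 / p) * C) := by
  rcases eq_or_ne t 0 with rfl | ht
  · simp
  rw [eLpNorm_const_smul, eLpNorm_eq_ofReal_bergmanNorm hp hD, ← ofReal_norm,
    ← ENNReal.ofReal_mul (norm_nonneg _), norm_inv, Real.norm_eq_abs]
  refine ENNReal.ofReal_le_ofReal ?_
  calc |t|⁻¹ * (π ^ (1 / p) * bergmanNorm p D) ≤ |t|⁻¹ * (π ^ (1 / p) * (C * |t|)) := by gcongr
    _ = π ^ (1 / p) * C := by field_simp

theorem memLp_of_memLp_mul_id {g : ℂ → ℂ} (hg : ContinuousOn g (ball 0 1)) {q : ENNReal}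
    (h : MemLp (fun z => g z * z) q (volume.restrict (ball 0 1))) :
    MemLp g q (volume.restrict (ball 0 1)) := by
  have : IsFiniteMeasure (volume.restrict (ball (0 : ℂ) 1)) :=
    isFiniteMeasure_restrict.2 measure_ball_lt_top.ne
  -- `g` is bounded on `closedBall 0 2⁻¹`, and outside it `‖g z‖ ≤ 2 * ‖g z * z‖`.
  obtain ⟨M, hM⟩ := (isCompact_closedBall (0 : ℂ) 2⁻¹).exists_bound_of_continuousOn
    (hg.mono (closedBall_subset_ball (by norm_num)))
  refine ((memLp_const M).add (h.norm.const_mul 2)).of_le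
    (hg.aestronglyMeasurable measurableSet_ball) ?_
  filter_upwards [ae_restrict_mem measurableSet_ball] with z hz
  have hM0 : 0 ≤ M := (norm_nonneg _).trans (hM 0 (by simp))
  have hgz : 0 ≤ ‖g z * z‖ := norm_nonneg _
  rw [Pi.add_apply, Real.norm_of_nonneg (by positivity)]
  rcases le_or_gt ‖z‖ 2⁻¹ with hz' | hz'
  · linarith [hM z (by simpa using hz')]
  · rw [norm_mul] at hgz ⊢
    nlinarith [norm_nonneg (g z)]

theorem stmt14 (p : ℝ) (hp : 1 ≤ p) (f : ℂ → ℂ) (hf : MemAp p f) (C : ℝ)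
    (hC : ∀ᶠ t : ℝ in 𝓝 0,
      bergmanNorm p (fun z => f (Complex.exp ((t : ℂ) * Complex.I) * z) - f z) ≤ C * |t|) :
    MemAp p (deriv f) := by
  have hp0 : 0 < p := one_pos.trans_le hp
  obtain ⟨hfa, hfLp⟩ := (memAp_iff_memLp hp0).1 hf
  have hfa' : AnalyticOnNhd ℂ f (ball 0 1) := isOpen_ball.analyticOn_iff_analyticOnNhd.1 hfa
  set D : ℝ → ℂ → ℂ := fun t z => f (exp (t * I) * z) - f z
  have hD : ∀ t, MemLp (D t) (ENNReal.ofReal p) (volume.restrict (ball 0 1)) := fun t =>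
    (hfLp.comp_measurePreserving (measurePreserving_circle_mul_restrict_ball (Circle.exp t) 1)).sub
      hfLp
  have hslope : ∀ z ∈ ball (0 : ℂ) 1,
      Tendsto (fun t : ℝ => (t⁻¹ • D t) z) (𝓝[≠] 0) (𝓝 (deriv f z * (I * z))) := fun z hz => by
    convert hasDerivAt_iff_tendsto_slope.1
      (hasDerivAt_comp_exp_mul_I_mul (hfa' z hz).differentiableAt) using 1
    funext t
    simp [slope_def_module, D]
  have hLp :
      MemLp (fun z => deriv f z * (I * z)) (ENNReal.ofReal p) (volume.restrict (ball 0 1)) :=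
    ⟨(hfa'.deriv.continuousOn.mul (by fun_prop)).aestronglyMeasurable measurableSet_ball,
      (eLpNorm_le_of_ae_tendsto (fun t => ((hD t).const_smul t⁻¹).1)
        ((ae_restrict_iff' measurableSet_ball).2 (Eventually.of_forall hslope))
        ((hC.filter_mono nhdsWithin_le_nhds).mono fun t ht =>
          eLpNorm_smul_inv_le_of_bergmanNorm_le hp0 (hD t) ht)).trans_lt ENNReal.ofReal_lt_top⟩
  refine (memAp_iff_memLp hp0).2
    ⟨hfa'.deriv.analyticOn, memLp_of_memLp_mul_id hfa'.deriv.continuousOn ?_⟩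
  simpa [mul_left_comm _ I, ← mul_assoc] using hLp.const_mul (-I)
end

section
/- Let 1 ≤ p < ∞, 0 < α ≤ 1, and f analytic on the unit disc with A_p(s, f') ≤ C(1-s)^{α-1} for s ∈ (0,1). Then ‖f_r - f‖_{A^p} ≤ ∫_r^1 A_p(s, f') ds = O((1-r)^α) as r → 1⁻. -/
/-
For `|z| < 1`, `f z - f (r z) = ∫_r^1 z f'(s z) ds`, so Minkowski's integral inequality
bounds `‖f_r - f‖_{A^p}` by `∫_r^1 A_p(s, f') ds`. We realise this by viewing `s ↦ f_s` as a
curve in `Lᵖ` of the normalized area measure: on `[r, b]` with `b < 1` it is differentiable, with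
derivative `z ↦ z f'(s z)` of norm at most `A_p(s, f')`, so a mean value inequality gives
`‖f_b - f_r‖ ≤ ∫_r^b A_p(s, f') ds`, and Fatou's lemma lets `b → 1`. The growth bound on
`A_p(s, f')` makes it integrable near `1`, with `∫_r^1 C (1 - s)^(α - 1) ds = C (1 - r)^α / α`.
-/

open Complex MeasureTheory Real Metric Set Filter Topology Asymptotics

open scoped ENNReal NNReal

/-- A norming functional reduces this to the real-valued
`intervalIntegral.sub_le_integral_of_hasDeriv_right_of_le`, which needs the bound `N` to be
integrable only, not continuous. -/
theorem norm_sub_le_integral_of_norm_deriv_right_le {E : Type*} [NormedAddCommGroup E]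
    [NormedSpace ℝ E] {Φ Φ' : ℝ → E} {N : ℝ → ℝ} {a b : ℝ} (hab : a ≤ b)
    (hcont : ContinuousOn Φ (Icc a b))
    (hderiv : ∀ x ∈ Ioo a b, HasDerivWithinAt Φ (Φ' x) (Ioi x) x)
    (hN : IntegrableOn N (Icc a b)) (hbound : ∀ x ∈ Ioo a b, ‖Φ' x‖ ≤ N x) :
    ‖Φ b - Φ a‖ ≤ ∫ x in a..b, N x := by
  obtain ⟨ℓ, hℓ, hℓΦ⟩ := exists_dual_vector'' ℝ (Φ b - Φ a)
  have hℓ_le : ∀ y, ℓ y ≤ ‖y‖ := fun y =>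
    calc ℓ y ≤ ‖ℓ y‖ := le_abs_self _
      _ ≤ ‖ℓ‖ * ‖y‖ := ℓ.le_opNorm y
      _ ≤ ‖y‖ := mul_le_of_le_one_left (norm_nonneg _) hℓ
  have := intervalIntegral.sub_le_integral_of_hasDeriv_right_of_le hab
    (ℓ.continuous.comp_continuousOn hcont)
    (fun x hx => ℓ.hasFDerivAt.comp_hasDerivWithinAt x (hderiv x hx)) hN
    (fun x hx => (hℓ_le _).trans (hbound x hx))
  rwa [Function.comp_apply, Function.comp_apply, ← map_sub, hℓΦ] at this

section LpDerivative

variable {α E : Type*} [MeasurableSpace α] [NormedAddCommGroup E] (p : ℝ≥0∞) (μ : Measure α)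

open scoped Classical in
noncomputable def toLpOrZero (F : α → E) : Lp E p μ :=
  if h : MemLp F p μ then h.toLp F else 0

variable {p μ}

theorem toLpOrZero_of_memLp {F : α → E} (h : MemLp F p μ) : toLpOrZero p μ F = h.toLp F := by
  classical exact dif_pos h

variable [NormedSpace ℝ E] [Fact (1 ≤ p)] [IsFiniteMeasure μ]

theorem hasDerivWithinAt_toLpOrZero {F G : ℝ → α → E} {s : Set ℝ}
    {t : ℝ} {K : ℝ≥0} (ht : t ∈ s) (hF : ∀ u ∈ s, MemLp (F u) p μ) (hG : MemLp (G t) p μ)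
    (hTaylor : ∀ u ∈ s, ∀ᵐ x ∂μ, ‖F u x - F t x - (u - t) • G t x‖ ≤ K * (u - t) ^ 2) :
    HasDerivWithinAt (fun u => toLpOrZero p μ (F u)) (toLpOrZero p μ (G t)) s t := by
  rw [hasDerivWithinAt_iff_isLittleO]
  refine IsBigO.trans_isLittleO ?_ ((isLittleO_pow_sub_sub t one_lt_two).mono nhdsWithin_le_nhds)
  refine IsBigO.of_bound ((μ univ ^ p.toReal⁻¹).toReal * K) ?_
  filter_upwards [self_mem_nhdsWithin] with u hu
  have hrem := ((hF u hu).sub (hF t ht)).sub (hG.const_smul (u - t))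
  have hLp : toLpOrZero p μ (F u) - toLpOrZero p μ (F t) - (u - t) • toLpOrZero p μ (G t) =
      hrem.toLp _ := by
    rw [toLpOrZero_of_memLp (hF u hu), toLpOrZero_of_memLp (hF t ht), toLpOrZero_of_memLp hG,
      ← MemLp.toLp_const_smul, ← MemLp.toLp_sub, ← MemLp.toLp_sub]
  have hbound := eLpNorm_le_of_ae_bound (p := p) (hTaylor u hu)
  rw [hLp, Lp.norm_toLp, Real.norm_eq_abs, Real.norm_eq_abs, abs_pow, abs_abs, sq_abs,
    mul_assoc]
  calc (eLpNorm _ p μ).toReal ≤ (μ univ ^ p.toReal⁻¹ * ENNReal.ofReal (K * (u - t) ^ 2)).toReal :=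
        ENNReal.toReal_mono (by finiteness) hbound
    _ ≤ (μ univ ^ p.toReal⁻¹).toReal * (K * (u - t) ^ 2) := by
        rw [ENNReal.toReal_mul, ENNReal.toReal_ofReal (by positivity)]

theorem eLpNorm_sub_le_integral_of_taylor {F G : ℝ → α → E} {N : ℝ → ℝ} {a b : ℝ} {K : ℝ≥0}
    (hab : a ≤ b) (hF : ∀ t ∈ Icc a b, MemLp (F t) p μ) (hG : ∀ t ∈ Icc a b, MemLp (G t) p μ)
    (hTaylor : ∀ t ∈ Icc a b, ∀ u ∈ Icc a b,
      ∀ᵐ x ∂μ, ‖F u x - F t x - (u - t) • G t x‖ ≤ K * (u - t) ^ 2)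
    (hN : IntegrableOn N (Icc a b)) (hbound : ∀ t ∈ Ioo a b, (eLpNorm (G t) p μ).toReal ≤ N t) :
    eLpNorm (F b - F a) p μ ≤ ENNReal.ofReal (∫ t in a..b, N t) := by
  have hderiv : ∀ t ∈ Icc a b, HasDerivWithinAt (fun u => toLpOrZero p μ (F u))
      (toLpOrZero p μ (G t)) (Icc a b) t := fun t ht =>
    hasDerivWithinAt_toLpOrZero ht hF (hG t ht) (hTaylor t ht)
  have hmvt := norm_sub_le_integral_of_norm_deriv_right_le hab
    (fun t ht => (hderiv t ht).continuousWithinAt)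
    (fun t ht => (hderiv t (Ioo_subset_Icc_self ht)).mono_of_mem_nhdsWithin
      (Icc_mem_nhdsGT_of_mem (Ioo_subset_Ico_self ht)))
    hN (fun t ht => by
      rw [toLpOrZero_of_memLp (hG t (Ioo_subset_Icc_self ht)), Lp.norm_toLp]
      exact hbound t ht)
  have hsub := (hF b (right_mem_Icc.2 hab)).sub (hF a (left_mem_Icc.2 hab))
  rw [toLpOrZero_of_memLp (hF b (right_mem_Icc.2 hab)),
    toLpOrZero_of_memLp (hF a (left_mem_Icc.2 hab)), ← MemLp.toLp_sub, Lp.norm_toLp] at hmvt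
  exact (ENNReal.le_ofReal_iff_toReal_le hsub.eLpNorm_ne_top
    (ENNReal.toReal_nonneg.trans hmvt)).2 hmvt

end LpDerivative

theorem norm_sub_sub_smul_deriv_le_of_lipschitzOnWith {𝕜 E : Type*} [RCLike 𝕜]
    [NormedAddCommGroup E] [NormedSpace 𝕜 E] {f : 𝕜 → E} {s : Set 𝕜} {K : ℝ≥0}
    (hs : Convex ℝ s) (hf : ∀ w ∈ s, DifferentiableAt 𝕜 f w) (hf' : LipschitzOnWith K (deriv f) s)
    {v w : 𝕜} (hv : v ∈ s) (hw : w ∈ s) :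
    ‖f w - f v - (w - v) • deriv f v‖ ≤ K * ‖w - v‖ ^ 2 := by
  have hseg : segment ℝ v w ⊆ s := hs.segment_subset hv hw
  have hmvt := (convex_segment v w).norm_image_sub_le_of_norm_hasDerivWithin_le
    (f := fun u => f u - u • deriv f v) (f' := fun u => deriv f u - deriv f v)
    (C := K * ‖w - v‖)
    (fun u hu => by
      simpa only [one_smul] using ((hf u (hseg hu)).hasDerivAt.fun_sub
        ((hasDerivAt_id' u).smul_const (deriv f v))).hasDerivWithinAt)
    (fun u hu => hf'.norm_sub_le_of_le (hseg hu) hv (norm_sub_le_of_mem_segment hu))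
    (left_mem_segment ℝ v w) (right_mem_segment ℝ v w)
  calc ‖f w - f v - (w - v) • deriv f v‖
      = ‖(f w - w • deriv f v) - (f v - v • deriv f v)‖ := by rw [sub_smul]; abel_nf
    _ ≤ K * ‖w - v‖ * ‖w - v‖ := hmvt
    _ = K * ‖w - v‖ ^ 2 := by ring

theorem AnalyticOnNhd.exists_lipschitzOnWith_deriv {𝕜 E : Type*} [RCLike 𝕜]
    [NormedAddCommGroup E] [NormedSpace 𝕜 E] [CompleteSpace E] {f : 𝕜 → E} {s : Set 𝕜}
    (hf : AnalyticOnNhd 𝕜 f s) (hs : IsCompact s) (hc : Convex ℝ s) :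
    ∃ K, LipschitzOnWith K (deriv f) s := by
  obtain ⟨C, hC⟩ := hs.exists_bound_of_continuousOn hf.deriv.deriv.continuousOn
  exact ⟨C.toNNReal, hc.lipschitzOnWith_of_nnnorm_deriv_le
    (fun w hw => (hf.deriv w hw).differentiableAt)
    (fun w hw => by
      rw [← NNReal.coe_le_coe, coe_nnnorm]
      exact (hC w hw).trans (le_coe_toNNReal C))⟩

theorem ofReal_mul_mem_closedBall {t c : ℝ} (ht : |t| ≤ c) {z : ℂ}
    (hz : z ∈ closedBall (0 : ℂ) 1) : (t : ℂ) * z ∈ closedBall (0 : ℂ) c := by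
  rw [mem_closedBall_zero_iff] at hz ⊢
  rw [norm_mul, Complex.norm_real, Real.norm_eq_abs]
  nlinarith [abs_nonneg t, norm_nonneg z]

theorem AnalyticOnNhd.exists_dilation_taylor_bound {f : ℂ → ℂ}
    (hf : AnalyticOnNhd ℂ f (ball 0 1)) {c : ℝ} (hc : c < 1) :
    ∃ K : ℝ≥0, ∀ t u : ℝ, |t| ≤ c → |u| ≤ c → ∀ z ∈ closedBall (0 : ℂ) 1,
      ‖f (u * z) - f (t * z) - (u - t) • (z * deriv f (t * z))‖ ≤ K * (u - t) ^ 2 := by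
  have hsub : closedBall (0 : ℂ) c ⊆ ball 0 1 := closedBall_subset_ball hc
  obtain ⟨K, hK⟩ := (hf.mono hsub).exists_lipschitzOnWith_deriv (isCompact_closedBall 0 c)
    (convex_closedBall 0 c)
  refine ⟨K, fun t u ht hu z hz => ?_⟩
  have htaylor := norm_sub_sub_smul_deriv_le_of_lipschitzOnWith (convex_closedBall 0 c)
    (fun w hw => (hf w (hsub hw)).differentiableAt) hK
    (ofReal_mul_mem_closedBall ht hz) (ofReal_mul_mem_closedBall hu hz)
  have hdiff : (u : ℂ) * z - t * z = ((u - t : ℝ) : ℂ) * z := by push_cast; ring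
  have hnorm : ‖((u - t : ℝ) : ℂ) * z‖ ^ 2 ≤ (u - t) ^ 2 := by
    rw [norm_mul, Complex.norm_real, Real.norm_eq_abs, mul_pow, sq_abs]
    have := mem_closedBall_zero_iff.1 hz
    exact mul_le_of_le_one_right (sq_nonneg _) (pow_le_one₀ (norm_nonneg z) this)
  rw [hdiff, smul_eq_mul] at htaylor
  rw [Complex.real_smul, ← mul_assoc]
  exact htaylor.trans (mul_le_mul_of_nonneg_left hnorm K.coe_nonneg)

noncomputable def diskArea : Measure ℂ := ENNReal.ofReal π⁻¹ • volume.restrict (ball 0 1)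

instance : IsProbabilityMeasure diskArea := by
  constructor
  rw [diskArea, Measure.smul_apply, Measure.restrict_apply_univ, Complex.volume_ball,
    ENNReal.ofReal_one, one_pow, one_mul, smul_eq_mul, ← ENNReal.ofReal_coe_nnreal,
    NNReal.coe_real_pi, ← ENNReal.ofReal_mul (by positivity), inv_mul_cancel₀ pi_ne_zero,
    ENNReal.ofReal_one]

theorem ae_mem_ball_diskArea : ∀ᵐ z ∂diskArea, z ∈ ball (0 : ℂ) 1 :=
  Measure.ae_smul_measure (ae_restrict_mem measurableSet_ball) _

theorem ContinuousOn.aestronglyMeasurable_diskArea {E : Type*} [NormedAddCommGroup E]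
    {g : ℂ → E} (hg : ContinuousOn g (ball 0 1)) : AEStronglyMeasurable g diskArea :=
  (hg.aestronglyMeasurable measurableSet_ball).smul_measure _

theorem ContinuousOn.memLp_diskArea {E : Type*} [NormedAddCommGroup E] {g : ℂ → E}
    (hg : ContinuousOn g (closedBall 0 1)) (q : ℝ≥0∞) : MemLp g q diskArea := by
  obtain ⟨M, hM⟩ := (isCompact_closedBall (0 : ℂ) 1).exists_bound_of_continuousOn hg
  refine MemLp.of_bound (hg.mono ball_subset_closedBall).aestronglyMeasurable_diskArea M ?_
  filter_upwards [ae_mem_ball_diskArea] with z hz using hM z (ball_subset_closedBall hz)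

/-- This holds also when `g ∉ Lᵖ`: then the Bochner integral in `bergmanNorm` is `0` and the
`eLpNorm` is `∞`, whose `toReal` is `0`. -/
theorem bergmanNorm_eq_eLpNorm {p : ℝ} (hp : 0 < p) {g : ℂ → ℂ}
    (hg : AEStronglyMeasurable g diskArea) :
    bergmanNorm p g = (eLpNorm g (ENNReal.ofReal p) diskArea).toReal := by
  have hint : π⁻¹ * ∫ z in ball (0 : ℂ) 1, ‖g z‖ ^ p = ∫ z, ‖g z‖ ^ p ∂diskArea := by
    rw [diskArea, integral_smul_measure, ENNReal.toReal_ofReal (by positivity), smul_eq_mul]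
  have hp0 : ENNReal.ofReal p ≠ 0 := by simpa using hp
  rw [bergmanNorm, hint]
  by_cases hgp : MemLp g (ENNReal.ofReal p) diskArea
  · rw [hgp.eLpNorm_eq_integral_rpow_norm hp0 ENNReal.ofReal_ne_top,
      ENNReal.toReal_ofReal hp.le, ENNReal.toReal_ofReal (by positivity), one_div]
  · have hnorm : ¬ Integrable (fun z => ‖g z‖ ^ p) diskArea := by
      rwa [← ENNReal.toReal_ofReal hp.le, integrable_norm_rpow_iff hg hp0 ENNReal.ofReal_ne_top]
    rw [integral_undef hnorm, top_unique (not_lt.1 fun h => hgp ⟨hg, h⟩),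
      ENNReal.toReal_top, zero_rpow (by positivity)]

theorem ContinuousOn.dilation {E : Type*} [TopologicalSpace E] {g : ℂ → E}
    (hg : ContinuousOn g (ball 0 1)) {t : ℝ} (ht : |t| < 1) :
    ContinuousOn (fun z => g (t * z)) (closedBall 0 1) :=
  hg.comp (continuous_const.mul continuous_id).continuousOn fun _ hz =>
    closedBall_subset_ball ht (ofReal_mul_mem_closedBall le_rfl hz)

theorem Ap_eq_eLpNorm {p : ℝ} (hp : 0 < p) {g : ℂ → ℂ} (hg : ContinuousOn g (ball 0 1)) {t : ℝ}
    (ht : |t| < 1) :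
    Ap p g t = (eLpNorm (fun z => g (t * z)) (ENNReal.ofReal p) diskArea).toReal :=
  bergmanNorm_eq_eLpNorm hp
    ((hg.dilation ht).mono ball_subset_closedBall).aestronglyMeasurable_diskArea

theorem Ap_nonneg (p : ℝ) (g : ℂ → ℂ) (t : ℝ) : 0 ≤ Ap p g t :=
  rpow_nonneg (mul_nonneg (inv_nonneg.2 pi_pos.le)
    (integral_nonneg fun _ => rpow_nonneg (norm_nonneg _) _)) _

theorem measurable_Ap (p : ℝ) {g : ℂ → ℂ} (hg : Measurable g) : Measurable (Ap p g) := by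
  have hjoint : StronglyMeasurable (Function.uncurry fun (t : ℝ) (z : ℂ) => ‖g (t * z)‖ ^ p) :=
    ((hg.comp (Complex.measurable_ofReal.comp measurable_fst |>.mul measurable_snd)).norm.pow_const
      p).stronglyMeasurable
  exact ((hjoint.integral_prod_right (ν := volume.restrict (ball 0 1))).measurable.const_mul
    _).pow_const _

theorem eLpNorm_dilation_sub_le_integral_Ap {p : ℝ} (hp : 1 ≤ p) {f : ℂ → ℂ}
    (hf : AnalyticOnNhd ℂ f (ball 0 1)) {a b : ℝ} (ha : -1 < a) (hab : a ≤ b) (hb : b < 1)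
    (hN : IntegrableOn (Ap p (deriv f)) (Icc a b)) :
    eLpNorm (fun z => f (b * z) - f (a * z)) (ENNReal.ofReal p) diskArea ≤
      ENNReal.ofReal (∫ t in a..b, Ap p (deriv f) t) := by
  have : Fact (1 ≤ ENNReal.ofReal p) := ⟨ENNReal.one_le_ofReal.2 hp⟩
  have hc : max (-a) b < 1 := max_lt (by linarith) hb
  have habs : ∀ t ∈ Icc a b, |t| ≤ max (-a) b := fun t ht =>
    abs_le.2 ⟨by linarith [le_max_left (-a) b, ht.1], ht.2.trans (le_max_right _ _)⟩
  have habs1 : ∀ t ∈ Icc a b, |t| < 1 := fun t ht => (habs t ht).trans_lt hc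
  have hfc : ContinuousOn f (ball 0 1) := hf.continuousOn
  have hf'c : ContinuousOn (deriv f) (ball 0 1) := hf.deriv.continuousOn
  obtain ⟨K, hK⟩ := hf.exists_dilation_taylor_bound hc
  refine eLpNorm_sub_le_integral_of_taylor (F := fun t z => f (t * z))
    (G := fun t z => z * deriv f (t * z)) (K := K) hab
    (fun t ht => (hfc.dilation (habs1 t ht)).memLp_diskArea _)
    (fun t ht => (continuousOn_id.mul (hf'c.dilation (habs1 t ht))).memLp_diskArea _)
    (fun t ht u hu => ?_) hN (fun t ht => ?_)
  · filter_upwards [ae_mem_ball_diskArea] with z hz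
    exact hK t u (habs t ht) (habs u hu) z (ball_subset_closedBall hz)
  · have ht' := Ioo_subset_Icc_self ht
    rw [Ap_eq_eLpNorm (by linarith) hf'c (habs1 t ht')]
    refine ENNReal.toReal_mono ((hf'c.dilation (habs1 t ht')).memLp_diskArea _).eLpNorm_ne_top
      (eLpNorm_mono_ae ?_)
    filter_upwards [ae_mem_ball_diskArea] with z hz
    rw [norm_mul]
    exact mul_le_of_le_one_left (norm_nonneg _) (mem_ball_zero_iff.1 hz).le

theorem eLpNorm_dilation_sub_self_le_integral_Ap {p : ℝ} (hp : 1 ≤ p) {f : ℂ → ℂ}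
    (hf : AnalyticOnNhd ℂ f (ball 0 1)) {r : ℝ} (hr : -1 < r) (hr1 : r < 1)
    (hN : IntegrableOn (Ap p (deriv f)) (Icc r 1)) :
    eLpNorm (fun z => f (r * z) - f z) (ENNReal.ofReal p) diskArea ≤
      ENNReal.ofReal (∫ t in r..1, Ap p (deriv f) t) := by
  obtain ⟨u, -, hu_mem, hu_lim⟩ := exists_seq_strictMono_tendsto' hr1
  have hu_abs : ∀ n, |u n| < 1 :=
    fun n => abs_lt.2 ⟨hr.trans (hu_mem n).1, (hu_mem n).2⟩
  have hfc : ContinuousOn f (ball 0 1) := hf.continuousOn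
  have hlim : ∀ᵐ z ∂diskArea,
      Tendsto (fun n => f (r * z) - f (u n * z)) atTop (𝓝 (f (r * z) - f z)) := by
    filter_upwards [ae_mem_ball_diskArea] with z hz
    have hscale : Tendsto (fun n => (u n : ℂ) * z) atTop (𝓝 z) := by
      simpa using ((Complex.continuous_ofReal.tendsto 1).comp hu_lim).mul_const z
    exact tendsto_const_nhds.sub ((hf z hz).continuousAt.tendsto.comp hscale)
  refine (Lp.eLpNorm_lim_le_liminf_eLpNorm (fun n => ?_) _ hlim).trans
    (liminf_le_of_frequently_le' (Frequently.of_forall fun n => ?_))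
  · exact (((hfc.dilation (abs_lt.2 ⟨hr, hr1⟩)).sub (hfc.dilation (hu_abs n))).mono
      ball_subset_closedBall).aestronglyMeasurable_diskArea
  · calc eLpNorm (fun z => f (r * z) - f (u n * z)) (ENNReal.ofReal p) diskArea
        = eLpNorm (fun z => f (u n * z) - f (r * z)) (ENNReal.ofReal p) diskArea :=
          eLpNorm_sub_comm (fun z => f (r * z)) (fun z => f (u n * z)) _ _
      _ ≤ ENNReal.ofReal (∫ t in r..u n, Ap p (deriv f) t) :=
          eLpNorm_dilation_sub_le_integral_Ap hp hf hr (hu_mem n).1.le (hu_mem n).2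
            (hN.mono_set (Icc_subset_Icc_right (hu_mem n).2.le))
      _ ≤ ENNReal.ofReal (∫ t in r..1, Ap p (deriv f) t) :=
          ENNReal.ofReal_le_ofReal (intervalIntegral.integral_mono_interval le_rfl
            (hu_mem n).1.le (hu_mem n).2.le (ae_of_all _ (Ap_nonneg p _))
            ((intervalIntegrable_iff_integrableOn_Icc_of_le hr1.le).2 hN))

theorem intervalIntegrable_one_sub_rpow_s16 {α : ℝ} (hα : 0 < α) (r : ℝ) :
    IntervalIntegrable (fun s : ℝ => (1 - s) ^ (α - 1)) volume r 1 := by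
  simpa using ((intervalIntegral.intervalIntegrable_rpow' (by linarith : -1 < α - 1)).comp_sub_left
    1 : IntervalIntegrable (fun s : ℝ => (1 - s) ^ (α - 1)) volume (1 - (1 - r)) (1 - 0))

theorem integral_one_sub_rpow {α : ℝ} (hα : 0 < α) (r : ℝ) :
    ∫ s in r..1, (1 - s) ^ (α - 1) = (1 - r) ^ α / α := by
  rw [intervalIntegral.integral_comp_sub_left (fun x : ℝ => x ^ (α - 1)) 1,
    integral_rpow (Or.inl (by linarith)), sub_add_cancel, sub_self, zero_rpow hα.ne', sub_zero]

theorem ae_mem_Ioo_restrict_Icc {a b : ℝ} : ∀ᵐ s ∂(volume.restrict (Icc a b)), s ∈ Ioo a b :=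
  ae_restrict_of_ae_eq_of_ae_restrict Ioo_ae_eq_Icc (ae_restrict_mem measurableSet_Ioo)

theorem integrableOn_Icc_of_norm_le_mul_one_sub_rpow {g : ℝ → ℝ} {C α r : ℝ} (hα : 0 < α)
    (hr : r ≤ 1) (hg : AEStronglyMeasurable g (volume.restrict (Icc r 1)))
    (hbound : ∀ s ∈ Ioo r 1, ‖g s‖ ≤ C * (1 - s) ^ (α - 1)) :
    IntegrableOn g (Icc r 1) := by
  refine Integrable.mono' ((intervalIntegrable_iff_integrableOn_Icc_of_le hr).1
    ((intervalIntegrable_one_sub_rpow_s16 hα r).const_mul C)) hg ?_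
  filter_upwards [ae_mem_Ioo_restrict_Icc] with s hs using hbound s hs

theorem integral_le_of_le_mul_one_sub_rpow {g : ℝ → ℝ} {C α r : ℝ} (hα : 0 < α) (hr : r ≤ 1)
    (hg : IntegrableOn g (Icc r 1)) (hbound : ∀ s ∈ Ioo r 1, g s ≤ C * (1 - s) ^ (α - 1)) :
    ∫ s in r..1, g s ≤ C * (1 - r) ^ α / α := by
  calc ∫ s in r..1, g s ≤ ∫ s in r..1, C * (1 - s) ^ (α - 1) := by
        refine intervalIntegral.integral_mono_ae_restrict hr
          ((intervalIntegrable_iff_integrableOn_Icc_of_le hr).2 hg)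
          ((intervalIntegrable_one_sub_rpow_s16 hα r).const_mul C) ?_
        filter_upwards [ae_mem_Ioo_restrict_Icc] with s hs using hbound s hs
    _ = C * (1 - r) ^ α / α := by
        rw [intervalIntegral.integral_const_mul, integral_one_sub_rpow hα, mul_div_assoc]

theorem stmt16_general (p α : ℝ) (hp : 1 ≤ p) (hα : 0 < α) (f : ℂ → ℂ)
    (hf : AnalyticOn ℂ f (ball (0 : ℂ) 1)) (C : ℝ)
    (hC : ∀ s ∈ Ioo (0 : ℝ) 1, Ap p (deriv f) s ≤ C * (1 - s) ^ (α - 1)) :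
    (∀ r ∈ Ioo (0 : ℝ) 1,
      bergmanNorm p (fun z => f ((r : ℂ) * z) - f z) ≤ ∫ s in r..(1 : ℝ), Ap p (deriv f) s) ∧
    (fun r : ℝ => ∫ s in r..(1 : ℝ), Ap p (deriv f) s)
      =O[𝓝[<] (1 : ℝ)] (fun r => (1 - r) ^ α) := by
  have hfN : AnalyticOnNhd ℂ f (ball 0 1) := isOpen_ball.analyticOn_iff_analyticOnNhd.1 hf
  have hC' : ∀ r ∈ Ioo (0 : ℝ) 1, ∀ s ∈ Ioo r 1, Ap p (deriv f) s ≤ C * (1 - s) ^ (α - 1) :=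
    fun r hr s hs => hC s ⟨hr.1.trans hs.1, hs.2⟩
  have hint : ∀ r ∈ Ioo (0 : ℝ) 1, IntegrableOn (Ap p (deriv f)) (Icc r 1) := fun r hr =>
    integrableOn_Icc_of_norm_le_mul_one_sub_rpow hα hr.2.le
      (measurable_Ap p (measurable_deriv f)).aestronglyMeasurable
      fun s hs => (Real.norm_of_nonneg (Ap_nonneg p _ s)).trans_le (hC' r hr s hs)
  have hnonneg : ∀ r ∈ Ioo (0 : ℝ) 1, 0 ≤ ∫ s in r..1, Ap p (deriv f) s := fun r hr =>
    intervalIntegral.integral_nonneg hr.2.le fun s _ => Ap_nonneg p _ s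
  refine ⟨fun r hr => ?_, IsBigO.of_bound (|C| / α) ?_⟩
  · have hr' : -1 < r := by linarith [hr.1]
    rw [bergmanNorm_eq_eLpNorm (by linarith) ((hfN.continuousOn.dilation
      (abs_lt.2 ⟨hr', hr.2⟩)).mono ball_subset_closedBall |>.fun_sub
      hfN.continuousOn).aestronglyMeasurable_diskArea]
    exact ENNReal.toReal_le_of_le_ofReal (hnonneg r hr)
      (eLpNorm_dilation_sub_self_le_integral_Ap hp hfN hr' hr.2 (hint r hr))
  · filter_upwards [Ioo_mem_nhdsLT zero_lt_one] with r hr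
    have hpow : 0 ≤ (1 - r) ^ α := rpow_nonneg (by linarith [hr.2]) α
    rw [Real.norm_of_nonneg (hnonneg r hr), Real.norm_of_nonneg hpow]
    calc ∫ s in r..1, Ap p (deriv f) s ≤ C * (1 - r) ^ α / α :=
          integral_le_of_le_mul_one_sub_rpow hα hr.2.le (hint r hr) (hC' r hr)
      _ ≤ |C| / α * (1 - r) ^ α := by
          rw [div_mul_eq_mul_div]
          exact div_le_div_of_nonneg_right (mul_le_mul_of_nonneg_right (le_abs_self C) hpow) hα.le

theorem stmt16 (p α : ℝ) (hp : 1 ≤ p) (hα : 0 < α) (hα1 : α ≤ 1) (f : ℂ → ℂ)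
    (hf : AnalyticOn ℂ f (ball (0 : ℂ) 1)) (C : ℝ)
    (hC : ∀ s ∈ Ioo (0 : ℝ) 1, Ap p (deriv f) s ≤ C * (1 - s) ^ (α - 1)) :
    (∀ r ∈ Ioo (0 : ℝ) 1,
      bergmanNorm p (fun z => f ((r : ℂ) * z) - f z) ≤ ∫ s in r..(1 : ℝ), Ap p (deriv f) s) ∧
    (fun r : ℝ => ∫ s in r..(1 : ℝ), Ap p (deriv f) s)
      =O[𝓝[<] (1 : ℝ)] (fun r => (1 - r) ^ α) :=
  stmt16_general p α hp hα f hf C hC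
end
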